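/- Let A, B ⊂ ℝ^d be finite nonempty point sets with |A| = m, and write OPT = CDuT(A, B). Then for every ε ∈ (0, 1], the number of points a ∈ A satisfying OPT ≤ min_{b∈B} CD(A + (b−a), B) ≤ (2+ε)·OPT is at least ⌊mε/2⌋. -/
import Mathlib

open Finset
open scoped Classical

/-- Chamfer distance from finset `A` to finset `B` in `ℝ^d`:
`CD(A,B) = Σ_{a∈A} min_{b∈B} ‖a−b‖` (Euclidean norm). -/
noncomputable def CD {d : ℕ} (A B : Finset (EuclideanSpace ℝ (Fin d))) : ℝ :=
  ∑ a ∈ A, Metric.infDist a (B : Set (EuclideanSpace ℝ (Fin d)))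

/-- The translate `A + t = {a + t : a ∈ A}`. -/
noncomputable def shiftSet {d : ℕ} (A : Finset (EuclideanSpace ℝ (Fin d)))
    (t : EuclideanSpace ℝ (Fin d)) : Finset (EuclideanSpace ℝ (Fin d)) :=
  A.image (· + t)

/-- Chamfer distance under translation: `CDuT(A,B) = inf_{t∈ℝ^d} CD(A+t,B)`. -/
noncomputable def CDuT {d : ℕ} (A B : Finset (EuclideanSpace ℝ (Fin d))) : ℝ :=
  ⨅ t : EuclideanSpace ℝ (Fin d), CD (shiftSet A t) B

lemma CD_shift_eq {d : ℕ} (A B : Finset (EuclideanSpace ℝ (Fin d)))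
    (t : EuclideanSpace ℝ (Fin d)) :
    CD (shiftSet A t) B = ∑ a ∈ A, Metric.infDist (a + t) (B : Set (EuclideanSpace ℝ (Fin d))) := by
  unfold CD shiftSet
  exact Finset.sum_image (fun x _ y _ h => by simpa using h)

lemma CD_nonneg {d : ℕ} (A B : Finset (EuclideanSpace ℝ (Fin d))) : 0 ≤ CD A B :=
  Finset.sum_nonneg fun a _ => Metric.infDist_nonneg

lemma CD_shift_lipschitz {d : ℕ} (A B : Finset (EuclideanSpace ℝ (Fin d)))
    (s t : EuclideanSpace ℝ (Fin d)) :
    CD (shiftSet A s) B ≤ CD (shiftSet A t) B + A.card * dist s t := by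
  rw [CD_shift_eq, CD_shift_eq]
  have h : ∀ a ∈ A, Metric.infDist (a + s) (B : Set (EuclideanSpace ℝ (Fin d))) ≤
      Metric.infDist (a + t) (B : Set (EuclideanSpace ℝ (Fin d))) + dist s t := by
    intro a _
    have := Metric.infDist_le_infDist_add_dist (x := a + s) (y := a + t)
      (s := (B : Set (EuclideanSpace ℝ (Fin d))))
    simpa [dist_add_left] using this
  calc ∑ a ∈ A, Metric.infDist (a + s) (B : Set (EuclideanSpace ℝ (Fin d)))
      ≤ ∑ a ∈ A, (Metric.infDist (a + t) (B : Set (EuclideanSpace ℝ (Fin d))) + dist s t) :=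
        Finset.sum_le_sum h
    _ = _ := by rw [Finset.sum_add_distrib, Finset.sum_const, nsmul_eq_mul]

lemma CDuT_le {d : ℕ} (A B : Finset (EuclideanSpace ℝ (Fin d)))
    (t : EuclideanSpace ℝ (Fin d)) : CDuT A B ≤ CD (shiftSet A t) B :=
  ciInf_le ⟨0, by rintro _ ⟨t, rfl⟩; exact CD_nonneg _ _⟩ t

set_option maxHeartbeats 1000000 in
lemma exists_opt {d : ℕ} (A B : Finset (EuclideanSpace ℝ (Fin d)))
    (hA : A.Nonempty) (hB : B.Nonempty) :
    ∃ t, CD (shiftSet A t) B = CDuT A B := by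
  obtain ⟨a0, ha0⟩ := hA
  obtain ⟨b0, hb0⟩ := hB
  set f : EuclideanSpace ℝ (Fin d) → ℝ := fun t => CD (shiftSet A t) B with hf
  have hcont : Continuous f := by
    have : f = fun t => ∑ a ∈ A, Metric.infDist (a + t) (B : Set (EuclideanSpace ℝ (Fin d))) := by
      funext t; exact CD_shift_eq A B t
    rw [this]
    exact continuous_finset_sum _ fun a _ =>
      (Metric.continuous_infDist_pt _).comp (continuous_const.add continuous_id)
  set C : ℝ := dist a0 b0 + Metric.diam (B : Set (EuclideanSpace ℝ (Fin d))) with hC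
  have hlow : ∀ t, ‖t‖ - C ≤ f t := by
    intro t
    show ‖t‖ - C ≤ CD (shiftSet A t) B
    have h1 : Metric.infDist (a0 + t) (B : Set (EuclideanSpace ℝ (Fin d))) ≤
        CD (shiftSet A t) B := by
      rw [CD_shift_eq]
      exact Finset.single_le_sum
        (f := fun a => Metric.infDist (a + t) (B : Set (EuclideanSpace ℝ (Fin d))))
        (fun a _ => Metric.infDist_nonneg) ha0
    have h2 : dist (a0 + t) b0 ≤ Metric.infDist (a0 + t) (B : Set (EuclideanSpace ℝ (Fin d)))
        + Metric.diam (B : Set (EuclideanSpace ℝ (Fin d))) :=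
      Metric.dist_le_infDist_add_diam (B.finite_toSet.isBounded) (Finset.mem_coe.mpr hb0)
    have h4 : ‖t‖ ≤ dist (a0 + t) b0 + dist a0 b0 := by
      have h5 : dist (a0 + t) a0 ≤ dist (a0 + t) b0 + dist b0 a0 := dist_triangle _ _ _
      have h6 : dist (a0 + t) a0 = ‖t‖ := by
        rw [dist_eq_norm]; congr 1; abel
      rw [h6] at h5
      linarith [dist_comm b0 a0 ▸ h5, (dist_comm a0 b0).le]
    rw [hC]; linarith
  have hc : Filter.Tendsto f (Filter.cocompact _) Filter.atTop := by
    apply Filter.tendsto_atTop_mono hlow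
    have := Filter.tendsto_atTop_add_const_right (Filter.cocompact (EuclideanSpace ℝ (Fin d))) (-C)
      (tendsto_norm_cocompact_atTop (E := EuclideanSpace ℝ (Fin d)))
    simpa [sub_eq_add_neg] using this
  obtain ⟨t, ht⟩ := hcont.exists_forall_le hc
  exact ⟨t, le_antisymm (le_ciInf ht) (CDuT_le A B t)⟩

set_option maxHeartbeats 1000000 in
/-- For every `ε ∈ (0,1]`, at least `⌊mε/2⌋` points `a ∈ A` satisfy
`OPT ≤ min_{b∈B} CD(A+(b−a),B) ≤ (2+ε)·OPT`. -/
theorem many_good_candidate_anchors {d : ℕ} (A B : Finset (EuclideanSpace ℝ (Fin d)))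
    (hA : A.Nonempty) (hB : B.Nonempty) (m : ℕ) (hm : m = A.card)
    (ε : ℝ) (hε0 : 0 < ε) (hε1 : ε ≤ 1) :
    ⌊(m : ℝ) * ε / 2⌋ ≤
      ((A.filter fun a =>
          CDuT A B ≤ B.inf' hB (fun b => CD (shiftSet A (b - a)) B) ∧
          B.inf' hB (fun b => CD (shiftSet A (b - a)) B) ≤ (2 + ε) * CDuT A B).card : ℤ) := by
  obtain ⟨t₀, ht₀⟩ := exists_opt A B hA hB
  set OPT : ℝ := CDuT A B with hOPT
  set r : EuclideanSpace ℝ (Fin d) → ℝ :=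
    fun a => Metric.infDist (a + t₀) (B : Set (EuclideanSpace ℝ (Fin d))) with hr
  have hrsum : ∑ a ∈ A, r a = OPT := by rw [← ht₀, CD_shift_eq]
  have hrnn : ∀ a, 0 ≤ r a := fun a => Metric.infDist_nonneg
  have hOPTnn : 0 ≤ OPT := by rw [← ht₀]; exact CD_nonneg _ _
  set G : Finset (EuclideanSpace ℝ (Fin d)) :=
    A.filter (fun a => (m : ℝ) * r a ≤ (1 + ε) * OPT) with hG
  -- membership in the target set
  have hsub : G ⊆ A.filter fun a =>
      CDuT A B ≤ B.inf' hB (fun b => CD (shiftSet A (b - a)) B) ∧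
      B.inf' hB (fun b => CD (shiftSet A (b - a)) B) ≤ (2 + ε) * CDuT A B := by
    intro a ha
    rw [hG, Finset.mem_filter] at ha
    obtain ⟨haA, har⟩ := ha
    rw [Finset.mem_filter]
    refine ⟨haA, ?_, ?_⟩
    · exact Finset.le_inf' hB _ (fun b _ => CDuT_le A B (b - a))
    · obtain ⟨b, hbB, hbd⟩ := (B.finite_toSet.isCompact).exists_infDist_eq_dist
        (Finset.coe_nonempty.mpr hB) (a + t₀)
      have hinf : B.inf' hB (fun b => CD (shiftSet A (b - a)) B) ≤ CD (shiftSet A (b - a)) B :=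
        Finset.inf'_le _ (Finset.mem_coe.mp hbB)
      have hlip := CD_shift_lipschitz A B (b - a) t₀
      have hdist : dist (b - a) t₀ = r a := by
        show dist (b - a) t₀ = Metric.infDist (a + t₀) (B : Set (EuclideanSpace ℝ (Fin d)))
        rw [hbd, dist_eq_norm, dist_eq_norm, ← norm_neg (b - a - t₀)]
        congr 1; abel
      rw [ht₀, hdist, ← hm] at hlip
      calc B.inf' hB (fun b => CD (shiftSet A (b - a)) B) ≤ CD (shiftSet A (b - a)) B := hinf
        _ ≤ OPT + (m : ℝ) * r a := hlip
        _ ≤ OPT + (1 + ε) * OPT := by linarith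
        _ = (2 + ε) * CDuT A B := by rw [← hOPT]; ring
  refine le_trans ?_ (Int.ofNat_le.mpr (Finset.card_le_card hsub))
  -- counting: card G ≥ m ε / 2
  have hkey : (m : ℝ) * ε / 2 ≤ (G.card : ℝ) := by
    set D : Finset (EuclideanSpace ℝ (Fin d)) :=
      A.filter (fun a => ¬ ((m : ℝ) * r a ≤ (1 + ε) * OPT)) with hD
    have hcards : G.card + D.card = m := by
      rw [hG, hD, hm]; exact Finset.card_filter_add_card_filter_not _
    rcases eq_or_lt_of_le hOPTnn with hO0 | hOpos
    · -- OPT = 0 : every r a = 0, so G = A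
      have hall : ∀ a ∈ A, r a = 0 := by
        rw [← hO0] at hrsum
        exact fun a ha => (Finset.sum_eq_zero_iff_of_nonneg (fun a _ => hrnn a)).mp hrsum a ha
      have : D = ∅ := by
        rw [hD, Finset.filter_eq_empty_iff]
        intro a ha
        rw [hall a ha, ← hO0]
        push_neg
        simp
      rw [this, Finset.card_empty] at hcards
      have hGm : G.card = m := by omega
      have hGm' : (G.card : ℝ) = m := by exact_mod_cast hGm
      nlinarith [Nat.cast_nonneg (α := ℝ) m]
    · -- OPT > 0 : Markov
      have hmark : (D.card : ℝ) * ((1 + ε) * OPT) ≤ (m : ℝ) * OPT := by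
        have h1 : ∀ a ∈ D, (1 + ε) * OPT ≤ (m : ℝ) * r a := by
          intro a ha
          rw [hD, Finset.mem_filter] at ha
          exact (not_le.mp ha.2).le
        have h2 : (D.card : ℝ) * ((1 + ε) * OPT) ≤ ∑ a ∈ D, (m : ℝ) * r a := by
          have := Finset.card_nsmul_le_sum D (fun a => (m : ℝ) * r a) ((1 + ε) * OPT) h1
          simpa [nsmul_eq_mul] using this
        have h3 : ∑ a ∈ D, (m : ℝ) * r a = (m : ℝ) * ∑ a ∈ D, r a := by
          rw [Finset.mul_sum]
        have h4 : ∑ a ∈ D, r a ≤ OPT := by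
          rw [← hrsum]
          exact Finset.sum_le_sum_of_subset_of_nonneg (Finset.filter_subset _ _)
            (fun a _ _ => hrnn a)
        have hm0 : (0:ℝ) ≤ (m:ℝ) := Nat.cast_nonneg m
        calc (D.card : ℝ) * ((1 + ε) * OPT) ≤ ∑ a ∈ D, (m : ℝ) * r a := h2
          _ = (m : ℝ) * ∑ a ∈ D, r a := h3
          _ ≤ (m : ℝ) * OPT := by nlinarith
      have hDle : (D.card : ℝ) * (1 + ε) ≤ m := by
        have h' : (D.card : ℝ) * (1 + ε) * OPT ≤ (m : ℝ) * OPT := by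
          rw [mul_assoc]; exact hmark
        exact le_of_mul_le_mul_right h' hOpos
      have hGD : (G.card : ℝ) + (D.card : ℝ) = m := by exact_mod_cast hcards
      nlinarith [Nat.cast_nonneg (α := ℝ) D.card]
  calc ⌊(m : ℝ) * ε / 2⌋ ≤ ⌊(G.card : ℝ)⌋ := Int.floor_le_floor hkey
    _ = (G.card : ℤ) := Int.floor_natCast _
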